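/- arXiv:1207.4650 — 2 statements merged into one kernel-verified Lean document; each statement's English description precedes it below -/
import Mathlib

section
/- Fix a prime p and let G be a finitely generated group. If H ≤ G is a subnormal subgroup of index a power of p (i.e., there is a finite chain H = H_0 ⊴ H_1 ⊴ ... ⊴ H_n = G with each term normal in the next, and [G : H] is a power of p), then RG_p(G) = RG_p(H)/[G : H]. -/
/-- `dGen G` is the minimal number of generators of the group `G`. -/
noncomputable def dGen (G : Type*) [Group G] : ℕ :=
  sInf {n : ℕ | ∃ S : Finset G, S.card = n ∧ Subgroup.closure (S : Set G) = ⊤}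

/-- The rank gradient of `G`. -/
noncomputable def rankGradient (G : Type*) [Group G] : ℝ :=
  sInf {r : ℝ | ∃ H : Subgroup G, H.index ≠ 0 ∧ r = ((dGen H : ℝ) - 1) / (H.index : ℝ)}

open scoped commutatorElement

/-- The subgroup `[G,G]G^p` of `G` (as a normal closure of its generators). -/
def pCommPow (p : ℕ) (G : Type*) [Group G] : Subgroup G :=
  Subgroup.normalClosure ({x | ∃ a b : G, x = ⁅a, b⁆} ∪ {x | ∃ g : G, x = g ^ p})

instance pCommPow_normal (p : ℕ) (G : Type*) [Group G] : (pCommPow p G).Normal :=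
  Subgroup.normalClosure_normal

/-- `d_p(G) = d(G/([G,G]G^p))`. -/
noncomputable def dp (p : ℕ) (G : Type*) [Group G] : ℕ :=
  dGen (G ⧸ pCommPow p G)

/-- The `p`-gradient of `G`. -/
noncomputable def pGradient (p : ℕ) (G : Type*) [Group G] : ℝ :=
  sInf {r : ℝ | ∃ H : Subgroup G, H.Normal ∧ (∃ k : ℕ, H.index = p ^ k) ∧
    r = ((dp p H : ℝ) - 1) / (H.index : ℝ)}

/-- The `p`-residual: intersection of all normal subgroups of `p`-power index. -/
def pResidual (p : ℕ) (G : Type*) [Group G] : Subgroup G :=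
  ⨅ H ∈ {H : Subgroup G | H.Normal ∧ ∃ k : ℕ, H.index = p ^ k}, H

instance pResidual_normal (p : ℕ) (G : Type*) [Group G] : (pResidual p G).Normal := by
  constructor
  intro n hn g
  simp only [pResidual, Subgroup.mem_iInf] at hn ⊢
  intro H hH
  exact hH.1.conj_mem n (hn H hH) g


/-- `H` is subnormal in `G`: there is a finite chain from `H` to `G`,
each term normal in the next. -/
def IsSubnormal {G : Type*} [Group G] (H : Subgroup G) : Prop :=
  ∃ (n : ℕ) (c : ℕ → Subgroup G), c 0 = H ∧ c n = ⊤ ∧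
    ∀ i < n, c i ≤ c (i + 1) ∧ ((c i).subgroupOf (c (i + 1))).Normal

/-!
The key estimate is `d_p(M) - 1 ≤ [G : M] (d_p(G) - 1)` for `M ⊴ G` of `p`-power index. Descending
through normal subgroups of index `p`, it reduces to `d_p(K) - 1 ≤ p (d_p(G) - 1)` for `K ⊴ G` of
index `p`, which is the sharp Schreier bound in the finite `p`-group `G ⧸ [K,K]K^p`: there
`d = d_p` by the Burnside basis theorem, and `K ⧸ [K,K]K^p` has index `p`. Hence the ratio
`(d_p(N) - 1) / [G : N]` can only decrease when `N` passes to a normal subgroup of `p`-power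
index, so for `H ⊴ G` of `p`-power index both infima may be taken over subgroups of `H` normal
in `G` (intersect with `H`, resp. take normal cores), which gives `RG_p(G) = RG_p(H) / [G : H]`.
The subnormal case follows by induction along the chain.
-/

section Development

open Subgroup

section dGen

variable {G H : Type*} [Group G] [Group H]

theorem dGen_le {S : Finset G} (hS : closure (S : Set G) = ⊤) : dGen G ≤ S.card :=
  Nat.sInf_le ⟨S, rfl, hS⟩

theorem exists_card_eq_dGen [Group.FG G] :
    ∃ S : Finset G, S.card = dGen G ∧ closure (S : Set G) = ⊤ :=
  Nat.sInf_mem (Group.fg_iff'.mp ‹_›)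

theorem dGen_of_not_fg (hG : ¬Group.FG G) : dGen G = 0 :=
  Nat.sInf_eq_zero.mpr <| Or.inr <|
    Set.eq_empty_of_forall_notMem fun n hn => hG (Group.fg_iff'.mpr ⟨n, hn⟩)

theorem dGen_le_of_surjective [Group.FG G] {f : G →* H} (hf : Function.Surjective f) :
    dGen H ≤ dGen G := by
  classical
  obtain ⟨S, hcard, hS⟩ := exists_card_eq_dGen (G := G)
  have hfS : closure ((S.image f : Finset H) : Set H) = ⊤ := by
    rw [Finset.coe_image, ← MonoidHom.map_closure, hS, map_top_of_surjective f hf]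
  exact (dGen_le hfS).trans (hcard ▸ Finset.card_image_le)

theorem dGen_congr (e : G ≃* H) : dGen G = dGen H := by
  by_cases hG : Group.FG G
  · have : Group.FG H := Group.fg_of_surjective (f := e.toMonoidHom) e.surjective
    exact le_antisymm (dGen_le_of_surjective (f := e.symm.toMonoidHom) e.symm.surjective)
      (dGen_le_of_surjective (f := e.toMonoidHom) e.surjective)
  · have hH : ¬Group.FG H := fun _ =>
      hG (Group.fg_of_surjective (f := e.symm.toMonoidHom) e.symm.surjective)
    rw [dGen_of_not_fg hG, dGen_of_not_fg hH]

end dGen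

section pCommPow

variable {p : ℕ} {G H : Type*} [Group G] [Group H]

theorem commutator_mem_pCommPow (a b : G) : ⁅a, b⁆ ∈ pCommPow p G :=
  subset_normalClosure (Or.inl ⟨a, b, rfl⟩)

theorem pow_mem_pCommPow (g : G) : g ^ p ∈ pCommPow p G :=
  subset_normalClosure (Or.inr ⟨g, rfl⟩)

theorem pCommPow_le {N : Subgroup G} [N.Normal] (hcomm : ∀ a b : G, ⁅a, b⁆ ∈ N)
    (hpow : ∀ g : G, g ^ p ∈ N) : pCommPow p G ≤ N :=
  normalClosure_le_normal <| by
    rintro x (⟨a, b, rfl⟩ | ⟨g, rfl⟩)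
    exacts [hcomm a b, hpow g]

theorem map_pCommPow_le (f : G →* H) : (pCommPow p G).map f ≤ pCommPow p H :=
  map_le_iff_le_comap.mpr <| pCommPow_le
    (fun a b => by simpa only [mem_comap, map_commutatorElement] using commutator_mem_pCommPow _ _)
    (fun g => by simpa only [mem_comap, map_pow] using pow_mem_pCommPow _)

theorem map_pCommPow_mulEquiv (e : G ≃* H) : (pCommPow p G).map e.toMonoidHom = pCommPow p H := by
  refine le_antisymm (map_pCommPow_le _) ?_
  rw [map_equiv_eq_comap_symm']
  exact map_le_iff_le_comap.mp (map_pCommPow_le _)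

instance pCommPow_characteristic : (pCommPow p G).Characteristic :=
  characteristic_iff_map_le.mpr fun e => map_pCommPow_le e.toMonoidHom

theorem pow_eq_one_of_quotient_pCommPow (x : G ⧸ pCommPow p G) : x ^ p = 1 := by
  induction x using QuotientGroup.induction_on with
  | H g => rw [← QuotientGroup.mk_pow, QuotientGroup.eq_one_iff]; exact pow_mem_pCommPow g

theorem mul_comm_of_quotient_pCommPow (x y : G ⧸ pCommPow p G) : x * y = y * x := by
  induction x using QuotientGroup.induction_on with | H a =>
  induction y using QuotientGroup.induction_on with | H b =>
  rw [← commutatorElement_eq_one_iff_mul_comm]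
  exact (QuotientGroup.eq_one_iff _).mpr (commutator_mem_pCommPow a b)

theorem finite_quotient_pCommPow (hp : p ≠ 0) [Group.FG G] : Finite (G ⧸ pCommPow p G) :=
  letI : CommGroup (G ⧸ pCommPow p G) := { mul_comm := mul_comm_of_quotient_pCommPow }
  CommGroup.finite_of_fg_isMulTorsion _ fun x =>
    isOfFinOrder_iff_pow_eq_one.mpr
      ⟨p, Nat.pos_of_ne_zero hp, pow_eq_one_of_quotient_pCommPow x⟩

theorem isPGroup_quotient_pCommPow : IsPGroup p (G ⧸ pCommPow p G) :=
  fun x => ⟨1, by rw [pow_one, pow_eq_one_of_quotient_pCommPow]⟩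

end pCommPow

section dp

variable {p : ℕ} {G H : Type*} [Group G] [Group H]

theorem dp_le_of_surjective [Group.FG G] {f : G →* H} (hf : Function.Surjective f) :
    dp p H ≤ dp p G :=
  dGen_le_of_surjective (f := QuotientGroup.map _ _ f (map_le_iff_le_comap.mp (map_pCommPow_le f)))
    (QuotientGroup.map_surjective_of_surjective _ _ f (QuotientGroup.mk_surjective.comp hf) _)

theorem dp_congr (e : G ≃* H) : dp p G = dp p H :=
  dGen_congr (QuotientGroup.congr _ _ e (map_pCommPow_mulEquiv e))

end dp

section PrimePowerIndex

variable {p : ℕ} {G : Type*} [Group G]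

theorem finiteIndex_of_index_eq_pow (hp : p ≠ 0) {N : Subgroup G} (hN : ∃ k, N.index = p ^ k) :
    N.FiniteIndex :=
  ⟨by obtain ⟨k, hk⟩ := hN; rw [hk]; exact pow_ne_zero _ hp⟩

theorem exists_index_eq_pow_of_pow_mem (hp : p.Prime) {N : Subgroup G} [N.Normal] [N.FiniteIndex]
    (h : ∀ g : G, ∃ k, g ^ p ^ k ∈ N) : ∃ k, N.index = p ^ k := by
  have : Fact p.Prime := ⟨hp⟩
  refine IsPGroup.iff_card.mp fun q => ?_
  induction q using QuotientGroup.induction_on with | H g =>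
  obtain ⟨k, hk⟩ := h g
  exact ⟨k, by rw [← QuotientGroup.mk_pow, QuotientGroup.eq_one_iff]; exact hk⟩

theorem exists_relIndex_eq_pow (hp : p.Prime) {A B : Subgroup G} (hAB : A ≤ B)
    (hA : ∃ k, A.index = p ^ k) : ∃ k, A.relIndex B = p ^ k := by
  obtain ⟨k, hk⟩ := hA
  obtain ⟨j, -, hj⟩ := (Nat.dvd_prime_pow hp).mp (hk ▸ relIndex_dvd_index_of_le hAB)
  exact ⟨j, hj⟩

theorem exists_index_eq_pow_of_le (hp : p.Prime) {A B : Subgroup G} (hAB : A ≤ B)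
    (hA : ∃ k, A.index = p ^ k) : ∃ k, B.index = p ^ k := by
  obtain ⟨k, hk⟩ := hA
  obtain ⟨j, -, hj⟩ := (Nat.dvd_prime_pow hp).mp (hk ▸ index_dvd_of_le hAB)
  exact ⟨j, hj⟩

end PrimePowerIndex

section PGroup

variable {p : ℕ} {G : Type*} [Group G]

theorem pCommPow_le_of_index_eq_prime (hp : p.Prime) {N : Subgroup G} [N.Normal]
    (hN : N.index = p) : pCommPow p G ≤ N := by
  have : Fact p.Prime := ⟨hp⟩
  have : IsCyclic (G ⧸ N) := isCyclic_of_prime_card hN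
  refine pCommPow_le (fun a b => ?_) (fun g => hN ▸ pow_index_mem N g)
  rw [← QuotientGroup.eq_one_iff]
  exact commutatorElement_eq_one_iff_mul_comm.mpr (mul_comm' (a : G ⧸ N) b)

namespace IsPGroup

variable [Fact p.Prime] [Finite G] {M : Subgroup G}

theorem normal_of_isCoatom (hG : IsPGroup p G) (hM : IsCoatom M) : M.Normal :=
  NormalizerCondition.normal_of_coatom M
    (@Group.normalizerCondition_of_isNilpotent _ _ hG.isNilpotent) hM

theorem index_eq_of_isCoatom (hG : IsPGroup p G) (hM : IsCoatom M) : M.index = p := by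
  have := hG.normal_of_isCoatom hM
  have : Nontrivial (G ⧸ M) :=
    not_subsingleton_iff_nontrivial.mp (QuotientGroup.subsingleton_iff.not.mpr hM.1)
  have hdvd : p ∣ Nat.card (G ⧸ M) :=
    (hG.to_quotient M).card_eq_or_dvd.resolve_left Finite.one_lt_card.ne'
  obtain ⟨z, hz⟩ := exists_prime_orderOf_dvd_card' p hdvd
  have hz1 : z ≠ 1 := fun h => (Fact.out : p.Prime).one_lt.ne' (by rw [← hz, h, orderOf_one])
  have hzM : zpowers z = ⊤ := by
    apply comap_injective (QuotientGroup.mk'_surjective M)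
    rw [comap_top]
    refine (hM.le_iff.mp (QuotientGroup.le_comap_mk' M _)).resolve_right fun h => hz1 ?_
    rw [← zpowers_eq_bot]
    apply comap_injective (QuotientGroup.mk'_surjective M)
    rw [h, MonoidHom.comap_bot, QuotientGroup.ker_mk']
  rw [← hz, ← Nat.card_zpowers, hzM, card_top]
  rfl

theorem pCommPow_le_frattini (hG : IsPGroup p G) : pCommPow p G ≤ frattini G :=
  le_iInf₂ fun _ hM =>
    have := hG.normal_of_isCoatom hM
    pCommPow_le_of_index_eq_prime Fact.out (hG.index_eq_of_isCoatom hM)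

theorem dGen_eq_dp (hG : IsPGroup p G) : dGen G = dp p G := by
  classical
  refine le_antisymm ?_ (dGen_le_of_surjective (QuotientGroup.mk'_surjective (pCommPow p G)))
  obtain ⟨S, hcard, hS⟩ := exists_card_eq_dGen (G := G ⧸ pCommPow p G)
  set T : Finset G := S.image Quotient.out
  have hTS : (T : Set G).image (QuotientGroup.mk' (pCommPow p G)) = S := by
    simp [T, Set.image_image]
  have hT : closure (T : Set G) ⊔ frattini G = ⊤ := by
    refine top_unique (le_trans ?_ (sup_le_sup_left hG.pCommPow_le_frattini _))
    rw [← QuotientGroup.ker_mk' (pCommPow p G), ← comap_map_eq, MonoidHom.map_closure, hTS, hS,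
      comap_top]
  calc dGen G ≤ T.card := dGen_le (frattini_nongenerating hT)
    _ ≤ dp p G := Finset.card_image_le.trans hcard.le

end IsPGroup

theorem exists_normal_le_index_eq_prime (hp : p.Prime) {M : Subgroup G} [M.Normal] {k : ℕ}
    (hM : M.index = p ^ (k + 1)) : ∃ L : Subgroup G, L.Normal ∧ M ≤ L ∧ L.index = p := by
  have : Fact p.Prime := ⟨hp⟩
  have := finiteIndex_of_index_eq_pow hp.ne_zero ⟨_, hM⟩
  have hQ : IsPGroup p (G ⧸ M) := IsPGroup.of_card hM
  have : Nontrivial (G ⧸ M) := by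
    rw [← Finite.one_lt_card_iff_nontrivial]
    exact (Nat.one_lt_pow (Nat.succ_ne_zero k) hp.one_lt).trans_eq hM.symm
  obtain ⟨Mb, hMb, -⟩ :=
    (eq_top_or_exists_le_coatom (⊥ : Subgroup (G ⧸ M))).resolve_left bot_ne_top
  refine ⟨Mb.comap (QuotientGroup.mk' M), (hQ.normal_of_isCoatom hMb).comap _, ?_, ?_⟩
  · exact QuotientGroup.le_comap_mk' M Mb
  · rw [index_comap_of_surjective _ (QuotientGroup.mk'_surjective M), hQ.index_eq_of_isCoatom hMb]

end PGroup

section Schreier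

open scoped Pointwise

variable {p : ℕ} {G : Type*} [Group G] {H : Subgroup G}

theorem Subgroup.IsComplement.coe_toRightFun_of_mem {R : Set G} (hR : IsComplement (H : Set G) R)
    {g : G} (hg : g ∈ R) : (hR.toRightFun g : G) = g :=
  congrArg Subtype.val <| (isComplement_iff_existsUnique_mul_inv_mem.mp hR g).unique
    (hR.mul_inv_toRightFun_mem g) (show g * (⟨g, hg⟩ : R).1⁻¹ ∈ H by simp [H.one_mem])

theorem isComplement_image_range_pow [DecidableEq G] [H.Normal] [Finite (G ⧸ H)] {x : G}
    (hx : zpowers (x : G ⧸ H) = ⊤) :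
    IsComplement (H : Set G) ((Finset.range (orderOf (x : G ⧸ H))).image (x ^ ·)) := by
  classical
  have hmem : ∀ g t : G, g * t⁻¹ ∈ H ↔ (t : G ⧸ H) = g := fun g t => by
    rw [QuotientGroup.eq, ‹H.Normal›.mem_comm_iff]
  rw [isComplement_iff_existsUnique_mul_inv_mem]
  intro g
  have hg : (g : G ⧸ H) ∈ zpowers (x : G ⧸ H) := hx ▸ mem_top _
  have hg' : (g : G ⧸ H) ∈ Submonoid.powers (x : G ⧸ H) := mem_powers_iff_mem_zpowers.mpr hg
  obtain ⟨i, hi, hig⟩ := Finset.mem_image.mp (mem_powers_iff_mem_range_orderOf.mp hg')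
  refine ⟨⟨x ^ i, Finset.mem_image_of_mem _ hi⟩, ?_, ?_⟩
  · show g * (x ^ i)⁻¹ ∈ H
    rwa [hmem, QuotientGroup.mk_pow]
  · intro ⟨t, ht⟩ htg
    obtain ⟨j, hj, rfl⟩ := Finset.mem_image.mp ht
    replace htg : (x : G ⧸ H) ^ j = g := by
      rwa [SetLike.mem_coe, hmem, QuotientGroup.mk_pow] at htg
    have hji : j = i := pow_injOn_Iio_orderOf (Finset.mem_range.mp hj) (Finset.mem_range.mp hi)
      (htg.trans hig.symm)
    exact Subtype.ext (congrArg (x ^ ·) hji)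

/-- Schreier's lemma with the trivial generators discounted: each `r * s ∈ R` gives the Schreier
generator `1`. -/
theorem exists_finset_card_add_le_of_isComplement [DecidableEq G] {R S : Finset G}
    (hR : IsComplement (H : Set G) R) (hR1 : (1 : G) ∈ R) (hRS : R.erase 1 ⊆ R * S)
    (hS : closure (S : Set G) = ⊤) :
    ∃ T : Finset H, T.card + R.card ≤ R.card * S.card + 1 ∧ closure (T : Set H) = ⊤ := by
  let f : G → H := fun g => ⟨g * (hR.toRightFun g : G)⁻¹, hR.mul_inv_toRightFun_mem g⟩
  have hf : ∀ g ∈ R, f g = 1 := fun g hg =>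
    Subtype.ext (by simp [f, hR.coe_toRightFun_of_mem (Finset.mem_coe.mpr hg)])
  refine ⟨((R * S) \ R.erase 1).image f, ?_, ?_⟩
  · have h1 := Finset.card_sdiff_of_subset hRS
    have h2 := Finset.card_erase_of_mem hR1
    have h3 := Finset.card_le_card hRS
    have h4 : 0 < R.card := Finset.card_pos.mpr ⟨1, hR1⟩
    have h5 : (R * S).card ≤ R.card * S.card := Finset.card_mul_le
    have h6 := Finset.card_image_le (s := (R * S) \ R.erase 1) (f := f)
    omega
  · rw [eq_top_iff, ← closure_mul_image_eq_top' hR hR1 hS, closure_le]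
    intro t ht
    obtain ⟨g, hg, rfl⟩ := Finset.mem_image.mp ht
    by_cases hgR : g ∈ R.erase 1
    · change f g ∈ _
      rw [hf g (Finset.mem_of_mem_erase hgR)]
      exact one_mem _
    · exact subset_closure (Finset.mem_image_of_mem f (Finset.mem_sdiff.mpr ⟨hg, hgR⟩))

theorem exists_finset_card_add_le_of_index_eq_prime (hp : p.Prime) [H.Normal] (hH : H.index = p)
    {S : Finset G} (hS : closure (S : Set G) = ⊤) :
    ∃ T : Finset H, T.card + p ≤ p * S.card + 1 ∧ closure (T : Set H) = ⊤ := by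
  classical
  have : Fact p.Prime := ⟨hp⟩
  have : H.FiniteIndex := ⟨hH ▸ hp.ne_zero⟩
  obtain ⟨x, hxS, hxH⟩ : ∃ x ∈ S, x ∉ H := by
    by_contra! h
    have : H = ⊤ := top_unique (hS ▸ (closure_le H).mpr h)
    exact hp.one_lt.ne' (by rw [← hH, this, index_top])
  have hx : orderOf (x : G ⧸ H) = p := orderOf_eq_prime
    (by rw [← QuotientGroup.mk_pow, QuotientGroup.eq_one_iff]; exact hH ▸ pow_index_mem H x)
    (by rwa [Ne, QuotientGroup.eq_one_iff])
  have hR := isComplement_image_range_pow (H := H) (x := x)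
    (eq_top_of_card_eq _ (by rw [Nat.card_zpowers, hx, ← hH]; rfl))
  rw [hx] at hR
  set R := (Finset.range p).image (x ^ ·)
  have hR1 : (1 : G) ∈ R := Finset.mem_image.mpr ⟨0, Finset.mem_range.mpr hp.pos, pow_zero x⟩
  have hRS : R.erase 1 ⊆ R * S := by
    intro g hg
    obtain ⟨_ | i, hi, rfl⟩ := Finset.mem_image.mp (Finset.mem_of_mem_erase hg)
    · simp at hg
    · rw [pow_succ]
      exact Finset.mul_mem_mul
        (Finset.mem_image_of_mem _ (Finset.mem_range.mpr (by simp at hi; omega))) hxS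
  have hRcard : R.card = p := by rw [← Nat.card_eq_finsetCard, ← hH, ← hR.card_right]; rfl
  obtain ⟨T, hT, hTcl⟩ := exists_finset_card_add_le_of_isComplement hR hR1 hRS hS
  exact ⟨T, hRcard ▸ hT, hTcl⟩

end Schreier

section IndexPrime

variable {p : ℕ} {G : Type*} [Group G]

theorem IsPGroup.of_quotient {N : Subgroup G} [N.Normal] (hN : IsPGroup p N)
    (hQ : IsPGroup p (G ⧸ N)) : IsPGroup p G := fun g => by
  obtain ⟨k, hk⟩ := hQ g
  rw [← QuotientGroup.mk_pow, QuotientGroup.eq_one_iff] at hk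
  obtain ⟨l, hl⟩ := hN ⟨_, hk⟩
  exact ⟨k + l, by rw [pow_add, pow_mul]; exact congrArg Subtype.val hl⟩

noncomputable def quotientPCommPowEquivMap (p : ℕ) (K : Subgroup G) [K.Normal] :
    K ⧸ pCommPow p K ≃* K.map (QuotientGroup.mk' ((pCommPow p K).map K.subtype)) :=
  let φ := (QuotientGroup.mk' ((pCommPow p K).map K.subtype)).comp K.subtype
  have hker : φ.ker = pCommPow p K := by
    rw [← MonoidHom.comap_ker, QuotientGroup.ker_mk',
      comap_map_eq_self_of_injective K.subtype_injective]
  (QuotientGroup.quotientMulEquivOfEq hker.symm).trans <|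
    (QuotientGroup.quotientKerEquivRange φ).trans
      (MulEquiv.subgroupCongr (by rw [MonoidHom.range_comp, range_subtype]))

theorem dp_add_le_of_index_eq_prime (hp : p.Prime) [Group.FG G] (K : Subgroup G) [K.Normal]
    (hK : K.index = p) : dp p K + p ≤ p * dp p G + 1 := by
  -- Schreier's bound for `Kb ≅ K ⧸ [K,K]K^p` inside the finite `p`-group `G ⧸ N`.
  have : Fact p.Prime := ⟨hp⟩
  have : K.FiniteIndex := ⟨hK ▸ hp.ne_zero⟩
  have : Group.FG K := fg_of_index_ne_zero K
  set N := (pCommPow p K).map K.subtype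
  set Kb := K.map (QuotientGroup.mk' N)
  let e := quotientPCommPowEquivMap p K
  have hKb : Kb.index = p := by
    rw [index_map_eq _ (QuotientGroup.mk'_surjective N)
      (by rw [QuotientGroup.ker_mk']; exact map_subtype_le _), hK]
  have : Finite (K ⧸ pCommPow p K) := finite_quotient_pCommPow hp.ne_zero
  have : Finite Kb := Finite.of_equiv _ e.toEquiv
  have : Finite (G ⧸ N) := Nat.finite_of_card_ne_zero <| by
    rw [← Kb.card_mul_index, hKb]; exact mul_ne_zero Nat.card_pos.ne' hp.ne_zero
  have hQ : IsPGroup p (G ⧸ N) := (isPGroup_quotient_pCommPow.of_equiv e).of_quotient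
    (IsPGroup.of_card (n := 1) (by rw [pow_one]; exact hKb))
  obtain ⟨S, hS, hScl⟩ := exists_card_eq_dGen (G := G ⧸ N)
  obtain ⟨T, hT, hTcl⟩ := exists_finset_card_add_le_of_index_eq_prime hp hKb hScl
  have hKT : dp p K ≤ T.card := (dGen_congr e).trans_le (dGen_le hTcl)
  have hSG : S.card ≤ dp p G := by
    rw [hS, hQ.dGen_eq_dp]; exact dp_le_of_surjective (QuotientGroup.mk'_surjective N)
  have := Nat.mul_le_mul_left p hSG
  omega

theorem dp_sub_one_le_index_mul (hp : p.Prime) [Group.FG G] (M : Subgroup G) [M.Normal] {k : ℕ}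
    (hM : M.index = p ^ k) : (dp p M : ℝ) - 1 ≤ M.index * ((dp p G : ℝ) - 1) := by
  induction k generalizing G with
  | zero =>
    rw [pow_zero, index_eq_one] at hM
    subst hM
    rw [index_top, dp_congr topEquiv, Nat.cast_one, one_mul]
  | succ k ih =>
    obtain ⟨L, hL, hML, hLp⟩ := exists_normal_le_index_eq_prime hp hM
    have : L.FiniteIndex := ⟨hLp ▸ hp.ne_zero⟩
    have : Group.FG L := fg_of_index_ne_zero L
    have hrel : (M.subgroupOf L).index = p ^ k := by
      have := relIndex_mul_index hML
      rw [hM, hLp, pow_succ] at this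
      exact Nat.eq_of_mul_eq_mul_right hp.pos this
    have hstep : (dp p L : ℝ) - 1 ≤ p * ((dp p G : ℝ) - 1) := by
      have : ((dp p L + p : ℕ) : ℝ) ≤ (p * dp p G + 1 : ℕ) := by
        exact_mod_cast dp_add_le_of_index_eq_prime hp L hLp
      push_cast at this
      linarith
    calc (dp p M : ℝ) - 1 = dp p (M.subgroupOf L) - 1 := by
          rw [dp_congr (subgroupOfEquivOfLe hML)]
      _ ≤ (M.subgroupOf L).index * ((dp p L : ℝ) - 1) := ih (M.subgroupOf L) hrel
      _ ≤ p ^ k * (p * ((dp p G : ℝ) - 1)) := by rw [hrel]; push_cast; gcongr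
      _ = M.index * ((dp p G : ℝ) - 1) := by rw [hM]; push_cast; ring

end IndexPrime

section pGradient

variable {p : ℕ} {G H : Type*} [Group G] [Group H]

noncomputable def pGradientRatio (p : ℕ) (N : Subgroup G) : ℝ :=
  ((dp p N : ℝ) - 1) / N.index

theorem neg_one_le_pGradientRatio (N : Subgroup G) : -1 ≤ pGradientRatio p N := by
  rcases Nat.eq_zero_or_pos N.index with h | h
  · simp [pGradientRatio, h]
  · have : (1 : ℝ) ≤ N.index := by exact_mod_cast h
    rw [pGradientRatio, le_div_iff₀ (by positivity)]
    nlinarith [(dp p N).cast_nonneg (α := ℝ)]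

theorem pGradient_le {N : Subgroup G} (hN : N.Normal) (hidx : ∃ k, N.index = p ^ k) :
    pGradient p G ≤ pGradientRatio p N :=
  csInf_le ⟨-1, by rintro _ ⟨K, -, -, rfl⟩; exact neg_one_le_pGradientRatio K⟩
    ⟨N, hN, hidx, rfl⟩

theorem le_pGradient {r : ℝ}
    (h : ∀ N : Subgroup G, N.Normal → (∃ k, N.index = p ^ k) → r ≤ pGradientRatio p N) :
    r ≤ pGradient p G :=
  le_csInf ⟨_, ⊤, inferInstance, ⟨0, by rw [index_top, pow_zero]⟩, rfl⟩ <| by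
    rintro _ ⟨N, hN, hidx, rfl⟩
    exact h N hN hidx

theorem pGradientRatio_map_mulEquiv (e : G ≃* H) (N : Subgroup G) :
    pGradientRatio p (N.map (e : G →* H)) = pGradientRatio p N := by
  rw [pGradientRatio, pGradientRatio, index_map_equiv,
    dp_congr (N.equivMapOfInjective (e : G →* H) e.injective).symm]

theorem pGradient_le_of_mulEquiv (e : G ≃* H) : pGradient p H ≤ pGradient p G :=
  le_pGradient fun N hN hidx =>
    (pGradient_le (hN.map _ e.surjective) (by rwa [index_map_equiv])).trans_eq
      (pGradientRatio_map_mulEquiv e N)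

theorem pGradient_congr (e : G ≃* H) : pGradient p G = pGradient p H :=
  le_antisymm (pGradient_le_of_mulEquiv e.symm) (pGradient_le_of_mulEquiv e)

theorem pGradientRatio_map_subtype {K : Subgroup G} (N : Subgroup K) :
    pGradientRatio p (N.map K.subtype) = pGradientRatio p N / K.index := by
  rw [pGradientRatio, pGradientRatio, index_map_subtype, Nat.cast_mul, div_div,
    dp_congr (N.equivMapOfInjective _ K.subtype_injective).symm]

theorem pGradientRatio_le_of_le (hp : p.Prime) {A B : Subgroup G} [Group.FG B] (hAB : A ≤ B)
    [(A.subgroupOf B).Normal] (hidx : ∃ k, A.relIndex B = p ^ k) :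
    pGradientRatio p A ≤ pGradientRatio p B := by
  obtain ⟨k, hk⟩ := hidx
  have key := dp_sub_one_le_index_mul hp (A.subgroupOf B) hk
  rw [dp_congr (subgroupOfEquivOfLe hAB)] at key
  have hpos : (0 : ℝ) < A.relIndex B := by rw [hk]; exact_mod_cast pow_pos hp.pos k
  rw [pGradientRatio, pGradientRatio, ← relIndex_mul_index hAB, Nat.cast_mul]
  calc ((dp p A : ℝ) - 1) / (A.relIndex B * B.index)
      ≤ A.relIndex B * ((dp p B : ℝ) - 1) / (A.relIndex B * B.index) := by gcongr; exact key
    _ = ((dp p B : ℝ) - 1) / B.index := mul_div_mul_left _ _ hpos.ne'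

end pGradient

section Subnormal

variable {p : ℕ} {G : Type*} [Group G]

theorem exists_normal_le_map_subtype (hp : p.Prime) {H : Subgroup G} [H.Normal]
    (hH : ∃ a, H.index = p ^ a) (K : Subgroup H) [K.Normal] (hK : ∃ m, K.index = p ^ m) :
    ∃ C : Subgroup G, C.Normal ∧ (∃ k, C.index = p ^ k) ∧ C ≤ K.map H.subtype := by
  obtain ⟨a, ha⟩ := hH
  obtain ⟨m, hm⟩ := hK
  have : (K.map H.subtype).FiniteIndex :=
    finiteIndex_of_index_eq_pow hp.ne_zero ⟨m + a, by rw [index_map_subtype, ha, hm, pow_add]⟩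
  refine ⟨(K.map H.subtype).normalCore, inferInstance,
    exists_index_eq_pow_of_pow_mem hp fun g => ⟨a + m, fun b => ?_⟩, normalCore_le _⟩
  -- Conjugates of `g ^ p ^ a` lie in `H`, and `p ^ m`-th powers of elements of `H` lie in `K`.
  have hy : b * g ^ p ^ a * b⁻¹ ∈ H := ‹H.Normal›.conj_mem _ (ha ▸ pow_index_mem H g) b
  rw [pow_add, pow_mul, ← conj_pow]
  exact mem_map_of_mem H.subtype (hm ▸ pow_index_mem K ⟨_, hy⟩)

theorem pGradient_eq_div_index_of_normal (hp : p.Prime) [Group.FG G] {H : Subgroup G} [H.Normal]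
    (hH : ∃ k, H.index = p ^ k) : pGradient p G = pGradient p H / H.index := by
  obtain ⟨a, ha⟩ := hH
  have hpos : (0 : ℝ) < H.index := by rw [ha]; exact_mod_cast pow_pos hp.pos a
  refine le_antisymm ?_ ?_
  · rw [le_div_iff₀ hpos]
    refine le_pGradient fun K hK hKidx => ?_
    obtain ⟨C, hC, hCidx, hCK⟩ := exists_normal_le_map_subtype hp ⟨a, ha⟩ K hKidx
    have := finiteIndex_of_index_eq_pow hp.ne_zero hCidx
    have := finiteIndex_of_le hCK
    have : Group.FG (K.map H.subtype) := fg_of_index_ne_zero _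
    rw [← le_div_iff₀ hpos, ← pGradientRatio_map_subtype]
    exact (pGradient_le hC hCidx).trans
      (pGradientRatio_le_of_le hp hCK (exists_relIndex_eq_pow hp hCK hCidx))
  · refine le_pGradient fun N hN ⟨k, hk⟩ => ?_
    have := finiteIndex_of_index_eq_pow hp.ne_zero ⟨k, hk⟩
    have := finiteIndex_of_index_eq_pow hp.ne_zero ⟨a, ha⟩
    have : Group.FG N := fg_of_index_ne_zero N
    have hD : ∃ j, (N ⊓ H).index = p ^ j := exists_index_eq_pow_of_pow_mem hp fun g =>
      ⟨k + a, ⟨by rw [pow_add, pow_mul]; exact pow_mem (hk ▸ pow_index_mem N g) _,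
        by rw [add_comm, pow_add, pow_mul]; exact pow_mem (ha ▸ pow_index_mem H g) _⟩⟩
    calc pGradient p H / H.index ≤ pGradientRatio p ((N ⊓ H).subgroupOf H) / H.index := by
          gcongr
          exact pGradient_le inferInstance (exists_relIndex_eq_pow hp inf_le_right hD)
      _ = pGradientRatio p (N ⊓ H) := by
          rw [← pGradientRatio_map_subtype, subgroupOf_map_subtype, inf_of_le_left inf_le_right]
      _ ≤ pGradientRatio p N := pGradientRatio_le_of_le hp inf_le_left
          (exists_relIndex_eq_pow hp inf_le_left hD)

theorem IsSubnormal.subgroup_isSubnormal {H : Subgroup G} (hH : _root_.IsSubnormal H) :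
    H.IsSubnormal := by
  obtain ⟨n, c, h0, hn, hc⟩ := hH
  induction n generalizing c H with
  | zero => exact h0 ▸ hn ▸ .top
  | succ n ih =>
    subst h0
    exact .step _ (c 1) (hc 0 n.succ_pos).1
      (ih (fun i => c (i + 1)) rfl hn fun i hi => hc (i + 1) (by omega)) (hc 0 n.succ_pos).2

theorem pGradient_eq_div_index_of_isSubnormal (hp : p.Prime) [Group.FG G] {H : Subgroup G}
    (hH : H.IsSubnormal) (hidx : ∃ k, H.index = p ^ k) :
    pGradient p G = pGradient p H / H.index := by
  induction hH with
  | top => rw [index_top, Nat.cast_one, div_one, pGradient_congr topEquiv]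
  | step H K hHK _ _ ih =>
    have hKidx := exists_index_eq_pow_of_le hp hHK hidx
    have := finiteIndex_of_index_eq_pow hp.ne_zero hKidx
    have : Group.FG K := fg_of_index_ne_zero K
    rw [ih hKidx, pGradient_eq_div_index_of_normal hp (exists_relIndex_eq_pow hp hHK hidx),
      pGradient_congr (subgroupOfEquivOfLe hHK), div_div, ← Nat.cast_mul,
      show (H.subgroupOf K).index * K.index = H.index from relIndex_mul_index hHK]

end Subnormal

end Development

/-- if `H` is a subnormal subgroup of `p`-power index in a finitely
generated group `G`, then `RG_p(G) = RG_p(H)/[G : H]`. -/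
theorem pGradient_of_subnormal (p : ℕ) (hp : p.Prime) (G : Type*) [Group G] [Group.FG G]
    (H : Subgroup G) (hsub : IsSubnormal H) (hidx : ∃ k : ℕ, H.index = p ^ k) :
    pGradient p G = pGradient p H / (H.index : ℝ) :=
  pGradient_eq_div_index_of_isSubnormal hp hsub.subgroup_isSubnormal hidx
end

section
/- Let G be a finitely generated group, p a prime, and x ∈ G. Then RG_p(G/⟨⟨x⟩⟩) ≥ RG_p(G) - 1, where ⟨⟨x⟩⟩ is the normal closure of x in G. -/
open scoped commutatorElement

/-!
Let `K` be a normal subgroup of `p`-power index in `G ⧸ ⟪x⟫` and `H` its preimage in `G`, so that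
`H ⧸ ⟪x⟫ ≅ K` and `[G : H] = [G ⧸ ⟪x⟫ : K]`. Inside `H`, the subgroup `⟪x⟫` is the normal closure
of the `[G : H]` conjugates `t⁻¹ x t` of `x` by coset representatives `t`. As `H ⧸ [H,H]H^p` is
abelian, killing these elements lowers `d_p` by at most `[G : H]`, so `d_p(H) ≤ d_p(K) + [G : H]`;
dividing by the index gives `(d_p(H) - 1) / [G : H] ≤ (d_p(K) - 1) / [G ⧸ ⟪x⟫ : K] + 1`.
-/

open Subgroup

section Generators

variable {A B : Type*} [Group A] [Group B]

lemma dGen_le_card (S : Finset A) (hS : closure (S : Set A) = ⊤) : dGen A ≤ S.card :=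
  Nat.sInf_le ⟨S, rfl, hS⟩

lemma dGen_eq_rank (A : Type*) [Group A] [Group.FG A] : dGen A = Group.rank A := by
  obtain ⟨S, hS, hS_top⟩ := Group.rank_spec A
  refine le_antisymm (hS ▸ dGen_le_card S hS_top) (le_csInf ⟨_, S, hS, hS_top⟩ ?_)
  rintro _ ⟨T, rfl, hT⟩
  exact Group.rank_le hT

lemma dGen_congr_s10 [Group.FG A] (e : A ≃* B) : dGen A = dGen B := by
  have : Group.FG B := Group.fg_of_surjective (f := e.toMonoidHom) e.surjective
  rw [dGen_eq_rank, dGen_eq_rank, Group.rank_congr e]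

lemma Subgroup.eq_top_of_map_eq_top_of_ker_le {f : A →* B} {C : Subgroup A} (hC : C.map f = ⊤)
    (hker : f.ker ≤ C) : C = ⊤ := by
  rw [← sup_eq_left.mpr hker, ← comap_map_eq, hC, comap_top]

lemma dGen_le_add_card_of_ker_le_closure [Group.FG B] {f : A →* B}
    (hf : Function.Surjective f) (S : Finset A) (hker : f.ker ≤ closure (S : Set A)) :
    dGen A ≤ dGen B + S.card := by
  classical
  obtain ⟨T, hT, hT_top⟩ := Group.rank_spec B
  let C := closure ((T.image (Function.surjInv hf) ∪ S : Finset A) : Set A)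
  have hC_top : C = ⊤ := by
    refine eq_top_of_map_eq_top_of_ker_le (top_unique ?_) (hker.trans (closure_mono ?_))
    · rw [← hT_top, MonoidHom.map_closure]
      refine closure_mono fun b hb => ⟨Function.surjInv hf b, ?_, Function.surjInv_eq hf b⟩
      simp only [Finset.coe_union, Finset.coe_image]
      exact Or.inl ⟨b, hb, rfl⟩
    · simp only [Finset.coe_union]
      exact Set.subset_union_right
  calc dGen A ≤ (T.image (Function.surjInv hf) ∪ S).card := dGen_le_card _ hC_top
    _ ≤ T.card + S.card := (Finset.card_union_le _ _).trans (by gcongr; exact Finset.card_image_le)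
    _ = dGen B + S.card := by rw [hT, dGen_eq_rank]

end Generators

lemma Subgroup.normalClosure_eq_closure {A : Type*} [Group A] [IsMulCommutative A] (s : Set A) :
    normalClosure s = closure s := by
  rw [← normalClosure_closure_eq_normalClosure, normalClosure_eq_self]

section ElementaryAbelianQuotient

variable (p : ℕ) {A B : Type*} [Group A] [Group B]

instance : IsMulCommutative (A ⧸ pCommPow p A) := by
  refine isMulCommutative_iff.mpr fun a b => ?_
  induction a using QuotientGroup.induction_on with | H a => ?_
  induction b using QuotientGroup.induction_on with | H b => ?_
  refine QuotientGroup.eq.mpr (subset_normalClosure (Or.inl ⟨b⁻¹, a⁻¹, ?_⟩))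
  simp only [commutatorElement_def, mul_inv_rev, inv_inv, mul_assoc]

lemma map_pCommPow {f : A →* B} (hf : Function.Surjective f) :
    (pCommPow p A).map f = pCommPow p B := by
  rw [pCommPow, pCommPow, map_normalClosure _ f hf, Set.image_union]
  congr 2
  · ext y
    constructor
    · rintro ⟨_, ⟨a, b, rfl⟩, rfl⟩
      exact ⟨f a, f b, map_commutatorElement f a b⟩
    · rintro ⟨a, b, rfl⟩
      obtain ⟨a, rfl⟩ := hf a
      obtain ⟨b, rfl⟩ := hf b
      exact ⟨_, ⟨a, b, rfl⟩, map_commutatorElement f a b⟩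
  · ext y
    constructor
    · rintro ⟨_, ⟨a, rfl⟩, rfl⟩
      exact ⟨f a, map_pow f a p⟩
    · rintro ⟨a, rfl⟩
      obtain ⟨a, rfl⟩ := hf a
      exact ⟨_, ⟨a, rfl⟩, map_pow f a p⟩

lemma dp_congr_s10 [Group.FG A] (e : A ≃* B) : dp p A = dp p B :=
  dGen_congr_s10 (QuotientGroup.congr _ _ e (map_pCommPow p e.surjective))

lemma dp_le_dp_quotient_add_card (M : Subgroup A) [M.Normal] [Group.FG (A ⧸ M)] (S : Finset A)
    (hM : M = normalClosure (S : Set A)) : dp p A ≤ dp p (A ⧸ M) + S.card := by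
  classical
  let P := pCommPow p A
  have hP : P.map (QuotientGroup.mk' M) = pCommPow p (A ⧸ M) :=
    map_pCommPow p (QuotientGroup.mk'_surjective M)
  let f := QuotientGroup.map P (pCommPow p (A ⧸ M)) (QuotientGroup.mk' M)
    (map_le_iff_le_comap.mp hP.le)
  have hf : Function.Surjective f := QuotientGroup.map_surjective_of_surjective _ _ _
    (QuotientGroup.mk_surjective.comp (QuotientGroup.mk'_surjective M)) _
  -- `A ⧸ P` is abelian, so the image of `M = ⟪S⟫` there is generated by the image of `S` alone.
  have hker : f.ker = closure ((S.image (QuotientGroup.mk' P) : Finset _) : Set (A ⧸ P)) := by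
    rw [QuotientGroup.ker_map, ← hP, QuotientGroup.comap_map_mk', Subgroup.map_sup,
      (Subgroup.map_eq_bot_iff _).mpr (QuotientGroup.ker_mk' P).ge, sup_bot_eq, hM,
      map_normalClosure _ _ (QuotientGroup.mk'_surjective P), Finset.coe_image,
      normalClosure_eq_closure]
  exact (dGen_le_add_card_of_ker_le_closure hf _ hker.le).trans
    (Nat.add_le_add_left Finset.card_image_le _)

end ElementaryAbelianQuotient

/-- Every conjugate `g x g⁻¹` is an `H`-conjugate of `t⁻¹ x t`, where `t` is the chosen
representative of the coset `g⁻¹ H`; so `[G : H]` elements normally generate `⟪x⟫` inside `H`. -/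
lemma exists_finset_normalClosure_eq_subgroupOf {G : Type*} [Group G] (H : Subgroup G)
    [H.FiniteIndex] {x : G} (hx : normalClosure {x} ≤ H) :
    ∃ S : Finset H, S.card ≤ H.index ∧
      normalClosure (S : Set H) = (normalClosure {x}).subgroupOf H := by
  classical
  let := H.fintypeQuotientOfFiniteIndex
  have hconj (t : G) : t⁻¹ * x * t ∈ normalClosure {x} := by
    simpa using (normalClosure_normal (s := {x})).conj_mem x (subset_normalClosure rfl) t⁻¹
  let c (q : G ⧸ H) : H := ⟨q.out⁻¹ * x * q.out, hx (hconj _)⟩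
  refine ⟨Finset.univ.image c, ?_, le_antisymm ?_ ?_⟩
  · rw [H.index_eq_card, Nat.card_eq_fintype_card]
    exact Finset.card_image_le.trans Finset.card_univ.le
  · refine normalClosure_le_normal ?_
    rintro _ hy
    obtain ⟨q, -, rfl⟩ := Finset.mem_image.mp hy
    exact mem_subgroupOf.mpr (hconj _)
  · suffices normalClosure {x} ≤ (normalClosure (Finset.univ.image c : Set H)).map H.subtype by
      exact fun h hh => (mem_map_iff_mem H.subtype_injective).mp (this (mem_subgroupOf.mp hh))
    refine closure_le _ |>.mpr fun y hy => ?_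
    obtain ⟨a, ha, hxy⟩ := Group.mem_conjugatesOfSet_iff.mp hy
    obtain ⟨g, rfl⟩ := isConj_iff.mp (Set.mem_singleton_iff.mp ha ▸ hxy)
    obtain ⟨h, hh⟩ := QuotientGroup.mk_out_eq_mul H g⁻¹
    have ht : g * (QuotientGroup.mk g⁻¹ : G ⧸ H).out ∈ H := by simp [hh]
    refine ⟨⟨_, ht⟩ * c (QuotientGroup.mk g⁻¹) * ⟨_, ht⟩⁻¹, normalClosure_normal.conj_mem _
      (subset_normalClosure (by simp)) _, ?_⟩
    simp only [c, coe_subtype, coe_mul, coe_inv]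
    group

lemma dp_le_dp_quotient_add_index (p : ℕ) {G : Type*} [Group G] (H : Subgroup G) [H.FiniteIndex]
    {x : G} [Group.FG (H ⧸ (normalClosure {x}).subgroupOf H)] (hx : normalClosure {x} ≤ H) :
    dp p H ≤ dp p (H ⧸ (normalClosure {x}).subgroupOf H) + H.index := by
  obtain ⟨S, hS, hS_eq⟩ := exists_finset_normalClosure_eq_subgroupOf H hx
  exact (dp_le_dp_quotient_add_card p _ S hS_eq.symm).trans (by gcongr)

noncomputable def QuotientGroup.comapMk'QuotientEquiv {G : Type*} [Group G] (N : Subgroup G)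
    [N.Normal] (K : Subgroup (G ⧸ N)) :
    K.comap (mk' N) ⧸ N.subgroupOf (K.comap (mk' N)) ≃* K :=
  (quotientMulEquivOfEq (by
    ext
    rw [mem_subgroupOf, MonoidHom.mem_ker, ← QuotientGroup.eq_one_iff, Subtype.ext_iff]
    rfl)).trans
    (quotientKerEquivOfSurjective _ ((mk' N).subgroupComap_surjective_of_surjective K
      (mk'_surjective N)))

section pGradient

variable {p : ℕ} {G : Type*} [Group G]

lemma pGradient_le_s10 (hp : 0 < p) (H : Subgroup G) [H.Normal] {k : ℕ} (hk : H.index = p ^ k) :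
    pGradient p G ≤ ((dp p H : ℝ) - 1) / H.index := by
  refine csInf_le ⟨-1, ?_⟩ ⟨H, inferInstance, ⟨k, hk⟩, rfl⟩
  rintro _ ⟨H', -, ⟨k', hk'⟩, rfl⟩
  have hH' : (1 : ℝ) ≤ H'.index := by rw [hk']; exact_mod_cast Nat.one_le_pow _ _ hp
  rw [le_div_iff₀ (by linarith)]
  linarith [(dp p H').cast_nonneg (α := ℝ)]

lemma le_pGradient_s10 {c : ℝ} (h : ∀ H : Subgroup G, H.Normal → (∃ k : ℕ, H.index = p ^ k) →
    c ≤ ((dp p H : ℝ) - 1) / H.index) : c ≤ pGradient p G :=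
  le_csInf ⟨_, ⊤, inferInstance, ⟨0, by simp⟩, rfl⟩ fun _ ⟨H, hH, hk, hr⟩ => hr ▸ h H hH hk

end pGradient

/-- `RG_p(G/⟪x⟫) ≥ RG_p(G) - 1`. -/
theorem pGradient_quotient_lower_bound_one (G : Type*) [Group G] [Group.FG G]
    (p : ℕ) (hp : p.Prime) (x : G) :
    pGradient p (G ⧸ Subgroup.normalClosure {x}) ≥ pGradient p G - 1 := by
  refine le_pGradient_s10 fun K _ ⟨k, hk⟩ => ?_
  have hK₀ : K.index ≠ 0 := by rw [hk]; exact pow_ne_zero _ hp.ne_zero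
  have : K.FiniteIndex := ⟨hK₀⟩
  let H := K.comap (QuotientGroup.mk' (normalClosure {x}))
  have hH : H.index = K.index := index_comap_of_surjective K (QuotientGroup.mk'_surjective _)
  have : H.FiniteIndex := ⟨hH ▸ hK₀⟩
  have hdp : (dp p H : ℝ) ≤ dp p K + K.index := by
    rw [← dp_congr_s10 p (QuotientGroup.comapMk'QuotientEquiv _ K), ← hH]
    exact_mod_cast dp_le_dp_quotient_add_index p H (QuotientGroup.le_comap_mk' _ K)
  have hK : (0 : ℝ) < K.index := Nat.cast_pos.mpr (Nat.pos_of_ne_zero hK₀)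
  calc pGradient p G - 1 ≤ ((dp p H : ℝ) - 1) / H.index - 1 :=
        sub_le_sub_right (pGradient_le_s10 hp.pos H (hH.trans hk)) 1
    _ ≤ ((dp p K : ℝ) - 1) / K.index := by
        rw [hH, div_sub_one hK.ne', div_le_div_iff_of_pos_right hK]
        linarith
end
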